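/- arXiv:1605.06396 — 2 statements merged into one kernel-verified Lean document; each statement's English description precedes it below -/
import Mathlib

section
/- Let ε > 0 and suppose R − I(X;Y) − ε = (c − r)(log₂ n)/n for constants c > r > 0. Then over the random i.i.d. codebook 𝒞 of size 2^{nR}, for every fixed y^n ∈ 𝒴^n the probability that D_{𝒞,1}(y^n) ≥ 1 + 1/√n is at most e^{−(1/(3n)) 2^{n(R − I(X;Y) − ε)}} = e^{−(1/3) n^{c − r − 1}}. -/
open Finset Real
open scoped BigOperators Classical

noncomputable section SoftCovering

/-- `p` is a probability mass function on the finite type `α`. -/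
def IsPMF {α : Type*} [Fintype α] (p : α → ℝ) : Prop :=
  (∀ a, 0 ≤ p a) ∧ ∑ a, p a = 1

variable {𝒳 𝒴 : Type*} [Fintype 𝒳] [Fintype 𝒴]

/-- The output distribution `Q_Y` on `𝒴` induced by the input distribution `Q_X`
and the channel `Q_{Y|X}`. -/
def outDist (QX : 𝒳 → ℝ) (QYX : 𝒳 → 𝒴 → ℝ) (y : 𝒴) : ℝ := ∑ x, QX x * QYX x y

/-- The `n`-fold i.i.d. product of a distribution `p`. -/
def prodDist {α : Type*} [Fintype α] (p : α → ℝ) (n : ℕ) (xs : Fin n → α) : ℝ :=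
  ∏ i, p (xs i)

/-- The `n`-fold memoryless channel: `Q_{Y^n|X^n = xs}(ys)`. -/
def chanProd (QYX : 𝒳 → 𝒴 → ℝ) (n : ℕ) (xs : Fin n → 𝒳) (ys : Fin n → 𝒴) : ℝ :=
  ∏ i, QYX (xs i) (ys i)

/-- The information density `ı_{X;Y}(x;y) = log₂ (Q_{Y|X}(y|x) / Q_Y(y))`, in bits. -/
def infoDensity (QX : 𝒳 → ℝ) (QYX : 𝒳 → 𝒴 → ℝ) (x : 𝒳) (y : 𝒴) : ℝ :=
  Real.logb 2 (QYX x y / outDist QX QYX y)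

/-- The mutual information `I(X;Y)` of `(X,Y) ~ Q_X Q_{Y|X}`, in bits. -/
def mutualInfo (QX : 𝒳 → ℝ) (QYX : 𝒳 → 𝒴 → ℝ) : ℝ :=
  ∑ x, ∑ y, QX x * QYX x y * infoDensity QX QYX x y

/-- The variance `V` of the information density under `(X,Y) ~ Q_X Q_{Y|X}`. -/
def infoVar (QX : 𝒳 → ℝ) (QYX : 𝒳 → 𝒴 → ℝ) : ℝ :=
  ∑ x, ∑ y, QX x * QYX x y * (infoDensity QX QYX x y - mutualInfo QX QYX) ^ 2

/-- The centered third absolute moment `ρ` of the information density. -/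
def infoThird (QX : 𝒳 → ℝ) (QYX : 𝒳 → 𝒴 → ℝ) : ℝ :=
  ∑ x, ∑ y, QX x * QYX x y * |infoDensity QX QYX x y - mutualInfo QX QYX| ^ 3

/-- The Rényi divergence of order `a` between `Q_{X,Y} = Q_X Q_{Y|X}` and the product
of its marginals `Q_X Q_Y`, in bits. -/
def renyiDiv (QX : 𝒳 → ℝ) (QYX : 𝒳 → 𝒴 → ℝ) (a : ℝ) : ℝ :=
  (a - 1)⁻¹ * Real.logb 2 (∑ x, ∑ y,
    (QX x * QYX x y) ^ a * (QX x * outDist QX QYX y) ^ (1 - a))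

/-- Membership in the jointly typical set
`𝒜_ε = {(x^n,y^n) : (1/n) log₂ (Q_{Y^n|X^n=x^n}(y^n)/Q_{Y^n}(y^n)) ≤ I(X;Y) + ε}`. -/
def JTypical (QX : 𝒳 → ℝ) (QYX : 𝒳 → 𝒴 → ℝ) (n : ℕ) (ε : ℝ)
    (xs : Fin n → 𝒳) (ys : Fin n → 𝒴) : Prop :=
  (n : ℝ)⁻¹ * Real.logb 2 (chanProd QYX n xs ys / prodDist (outDist QX QYX) n ys)
    ≤ mutualInfo QX QYX + ε

/-- The probability that `(X^n, Y^n) ~ Q_{X^n} Q_{Y^n|X^n}` is outside `𝒜_ε`. -/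
def atypProb (QX : 𝒳 → ℝ) (QYX : 𝒳 → 𝒴 → ℝ) (n : ℕ) (ε : ℝ) : ℝ :=
  ∑ xs : Fin n → 𝒳, ∑ ys : Fin n → 𝒴,
    if ¬ JTypical QX QYX n ε xs ys then prodDist QX n xs * chanProd QYX n xs ys else 0

/-- The induced output distribution `P_{Y^n|C} = 2^{-nR} ∑_m Q_{Y^n|X^n = x^n(m)}`
of a codebook `C` of size `M = 2^{nR}` (so `2^{-nR} = 1/M`). -/
def inducedDist (QYX : 𝒳 → 𝒴 → ℝ) (n M : ℕ) (C : Fin M → Fin n → 𝒳)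
    (ys : Fin n → 𝒴) : ℝ :=
  (M : ℝ)⁻¹ * ∑ m, chanProd QYX n (C m) ys

/-- The typical part `P_{C,1}(y^n) = 2^{-nR} ∑_m Q_{Y^n|X^n=x^n(m)}(y^n) 1{(x^n(m),y^n) ∈ 𝒜_ε}`. -/
def Ptyp (QX : 𝒳 → ℝ) (QYX : 𝒳 → 𝒴 → ℝ) (n M : ℕ) (ε : ℝ)
    (C : Fin M → Fin n → 𝒳) (ys : Fin n → 𝒴) : ℝ :=
  (M : ℝ)⁻¹ * ∑ m, if JTypical QX QYX n ε (C m) ys then chanProd QYX n (C m) ys else 0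

/-- The atypical part `P_{C,2}(y^n) = 2^{-nR} ∑_m Q_{Y^n|X^n=x^n(m)}(y^n) 1{(x^n(m),y^n) ∉ 𝒜_ε}`. -/
def Patyp (QX : 𝒳 → ℝ) (QYX : 𝒳 → 𝒴 → ℝ) (n M : ℕ) (ε : ℝ)
    (C : Fin M → Fin n → 𝒳) (ys : Fin n → 𝒴) : ℝ :=
  (M : ℝ)⁻¹ * ∑ m, if ¬ JTypical QX QYX n ε (C m) ys then chanProd QYX n (C m) ys else 0

/-- The density `D_{C,1}(y^n) = P_{C,1}(y^n)/Q_{Y^n}(y^n)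
= 2^{-nR} ∑_m (Q_{Y^n|X^n=x^n(m)}(y^n)/Q_{Y^n}(y^n)) 1{(x^n(m),y^n) ∈ 𝒜_ε}`. -/
def Dtyp (QX : 𝒳 → ℝ) (QYX : 𝒳 → 𝒴 → ℝ) (n M : ℕ) (ε : ℝ)
    (C : Fin M → Fin n → 𝒳) (ys : Fin n → 𝒴) : ℝ :=
  (M : ℝ)⁻¹ * ∑ m, if JTypical QX QYX n ε (C m) ys then
    chanProd QYX n (C m) ys / prodDist (outDist QX QYX) n ys else 0

/-- Total variation distance `(1/2) ∑_y |P y - Q y|` on a finite type. -/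
def tvDist {β : Type*} [Fintype β] (P Q : β → ℝ) : ℝ := (1 / 2) * ∑ y, |P y - Q y|

/-- Probability of an event `E` over the random codebook of `M` codewords drawn
i.i.d. from `Q_{X^n}`. -/
def cbProb (QX : 𝒳 → ℝ) (n M : ℕ) (E : (Fin M → Fin n → 𝒳) → Prop) : ℝ :=
  ∑ C : Fin M → Fin n → 𝒳, if E C then ∏ m, prodDist QX n (C m) else 0

/-- `𝒬(x)`: one minus the standard normal cumulative distribution function. -/
def gaussQ (x : ℝ) : ℝ :=
  (Real.sqrt (2 * Real.pi))⁻¹ * ∫ t in Set.Ioi x, Real.exp (-(t ^ 2 / 2))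

/-- `𝒬⁻¹`, the inverse of `𝒬`. -/
def gaussQInv : ℝ → ℝ := Function.invFun gaussQ

/-!
`D_{𝒞,1}(y^n)` is the empirical mean of the `M` i.i.d. variables `L(x^n(m))`, where `L` is the
likelihood ratio `Q_{Y^n|X^n}(y^n)/Q_{Y^n}(y^n)` cut off outside the typical set. The cut-off
makes `L ≤ B := 2^{n(I(X;Y)+ε)}`, and `𝔼 L ≤ 1` because the full ratio has mean exactly `1`
under `Q_{X^n}`. The multiplicative Chernoff bound for `[0, B]`-valued variables with mean at
most `1` bounds the probability of exceeding `1 + δ` by `exp(-δ² M / (3B))`; with `δ = 1/√n`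
and `M = 2^{nR}` this is `exp(-(1/(3n)) 2^{n(R-I(X;Y)-ε)})`.
-/

section Chernoff

lemma Real.exp_mul_le_one_add_mul_exp_sub_one {u : ℝ} (hu₀ : 0 ≤ u) (hu₁ : u ≤ 1) (s : ℝ) :
    exp (u * s) ≤ 1 + u * (exp s - 1) := by
  have h := convexOn_exp.2 (Set.mem_univ 0) (Set.mem_univ s) (sub_nonneg.2 hu₁) hu₀
    (sub_add_cancel 1 u)
  simp only [smul_eq_mul, mul_zero, zero_add, exp_zero] at h
  linarith

/-- The Chernoff exponent at the tilt `s = 7δ/10`, for which the cubic Taylor bound on `exp`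
suffices. -/
lemma Real.exp_sub_one_sub_mul_le {δ : ℝ} (hδ₀ : 0 ≤ δ) (hδ₁ : δ ≤ 1) :
    exp (7 / 10 * δ) - 1 - 7 / 10 * δ * (1 + δ) ≤ -(δ ^ 2 / 3) := by
  have hcubic := Real.exp_bound' (x := 7 / 10 * δ) (by positivity) (by linarith) (n := 3)
    (by norm_num)
  norm_num [Finset.sum_range_succ, Nat.factorial] at hcubic
  nlinarith [pow_le_pow_left₀ hδ₀ hδ₁ 3]

lemma sum_ite_le_le_exp_mul_sum_mul_exp {ι : Type*} [Fintype ι] (w f : ι → ℝ)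
    (hw : ∀ i, 0 ≤ w i) (a : ℝ) {t : ℝ} (ht : 0 ≤ t) :
    ∑ i, (if a ≤ f i then w i else 0) ≤ exp (-(t * a)) * ∑ i, w i * exp (t * f i) := by
  rw [Finset.mul_sum]
  refine Finset.sum_le_sum fun i _ => ?_
  split_ifs with h
  · have hone : 1 ≤ exp (-(t * a)) * exp (t * f i) := by
      rw [← exp_add]
      exact one_le_exp (by nlinarith)
    nlinarith [hw i]
  · have := hw i
    positivity

variable {α : Type*} [Fintype α]

lemma sum_pi_prod_mul_exp_sum (P L : α → ℝ) (M : ℕ) (t : ℝ) :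
    ∑ C : Fin M → α, (∏ m, P (C m)) * exp (t * ∑ m, L (C m))
      = (∑ x, P x * exp (t * L x)) ^ M := by
  simp only [Finset.mul_sum, exp_sum, ← Finset.prod_mul_distrib]
  rw [← Fintype.prod_sum fun (_ : Fin M) (x : α) => P x * exp (t * L x)]
  simp

lemma sum_mul_exp_le_exp_of_mean_le_one {P L : α → ℝ} (hP : IsPMF P) (hL₀ : ∀ x, 0 ≤ L x)
    {B : ℝ} (hB : 0 < B) (hLB : ∀ x, L x ≤ B) (hmean : ∑ x, P x * L x ≤ 1) {s : ℝ} (hs : 0 ≤ s) :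
    ∑ x, P x * exp (s / B * L x) ≤ exp ((exp s - 1) / B) := by
  have hchord : ∀ x, exp (s / B * L x) ≤ 1 + L x / B * (exp s - 1) := fun x => by
    rw [div_mul_comm]
    exact exp_mul_le_one_add_mul_exp_sub_one (div_nonneg (hL₀ x) hB.le)
      ((div_le_one hB).2 (hLB x)) s
  calc ∑ x, P x * exp (s / B * L x)
      ≤ ∑ x, P x * (1 + L x / B * (exp s - 1)) :=
        Finset.sum_le_sum fun x _ => mul_le_mul_of_nonneg_left (hchord x) (hP.1 x)
    _ = 1 + (∑ x, P x * L x) * ((exp s - 1) / B) := by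
        simp only [mul_add, mul_one, Finset.sum_add_distrib, hP.2, Finset.sum_mul]
        congr 1
        exact Finset.sum_congr rfl fun x _ => by ring
    _ ≤ 1 + (exp s - 1) / B := by
        have : 0 ≤ (exp s - 1) / B := div_nonneg (by linarith [one_le_exp hs]) hB.le
        nlinarith
    _ ≤ exp ((exp s - 1) / B) := by linarith [add_one_le_exp ((exp s - 1) / B)]

theorem chernoff_sum_ge {P L : α → ℝ} (hP : IsPMF P) (hL₀ : ∀ x, 0 ≤ L x)
    {B : ℝ} (hB : 0 < B) (hLB : ∀ x, L x ≤ B) (hmean : ∑ x, P x * L x ≤ 1)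
    (M : ℕ) {δ : ℝ} (hδ₀ : 0 ≤ δ) (hδ₁ : δ ≤ 1) :
    ∑ C : Fin M → α, (if M * (1 + δ) ≤ ∑ m, L (C m) then ∏ m, P (C m) else 0)
      ≤ exp (-(δ ^ 2 / 3) * (M / B)) := by
  set s := 7 / 10 * δ
  have hs : 0 ≤ s := by positivity
  calc ∑ C : Fin M → α, (if M * (1 + δ) ≤ ∑ m, L (C m) then ∏ m, P (C m) else 0)
      ≤ exp (-(s / B * (M * (1 + δ)))) * (∑ x, P x * exp (s / B * L x)) ^ M := by
        rw [← sum_pi_prod_mul_exp_sum]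
        exact sum_ite_le_le_exp_mul_sum_mul_exp _ _
          (fun C => Finset.prod_nonneg fun m _ => hP.1 _) _ (div_nonneg hs hB.le)
    _ ≤ exp (-(s / B * (M * (1 + δ)))) * exp ((exp s - 1) / B) ^ M := by
        gcongr
        · exact Finset.sum_nonneg fun x _ => mul_nonneg (hP.1 x) (exp_pos _).le
        · exact sum_mul_exp_le_exp_of_mean_le_one hP hL₀ hB hLB hmean hs
    _ = exp (M / B * (exp s - 1 - s * (1 + δ))) := by
        rw [← exp_nat_mul, ← exp_add]
        congr 1
        field_simp
        ring
    _ ≤ exp (-(δ ^ 2 / 3) * (M / B)) := by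
        rw [exp_le_exp, mul_comm _ (_ / B)]
        exact mul_le_mul_of_nonneg_left (exp_sub_one_sub_mul_le hδ₀ hδ₁) (by positivity)

end Chernoff

section TypicalDensity

lemma isPMF_prodDist {α : Type*} [Fintype α] {p : α → ℝ} (hp : IsPMF p) (n : ℕ) :
    IsPMF (prodDist p n) := by
  refine ⟨fun xs => Finset.prod_nonneg fun _ _ => hp.1 _, ?_⟩
  simp only [prodDist, ← Fintype.prod_sum fun (_ : Fin n) x => p x, hp.2, Finset.prod_const_one]

lemma sum_prodDist_mul_chanProd (QX : 𝒳 → ℝ) (QYX : 𝒳 → 𝒴 → ℝ) (n : ℕ) (ys : Fin n → 𝒴) :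
    ∑ xs, prodDist QX n xs * chanProd QYX n xs ys = prodDist (outDist QX QYX) n ys := by
  simp only [prodDist, chanProd, outDist, ← Finset.prod_mul_distrib]
  exact (Fintype.prod_sum fun i x => QX x * QYX x (ys i)).symm

lemma chanProd_div_prodDist_outDist_nonneg {QX : 𝒳 → ℝ} {QYX : 𝒳 → 𝒴 → ℝ} (hQX : IsPMF QX)
    (hQYX : ∀ x, IsPMF (QYX x)) (n : ℕ) (xs : Fin n → 𝒳) (ys : Fin n → 𝒴) :
    0 ≤ chanProd QYX n xs ys / prodDist (outDist QX QYX) n ys :=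
  div_nonneg (Finset.prod_nonneg fun _ _ => (hQYX _).1 _) <| Finset.prod_nonneg fun _ _ =>
    Finset.sum_nonneg fun x _ => mul_nonneg (hQX.1 x) ((hQYX x).1 _)

lemma le_two_rpow_of_inv_mul_logb_le {n : ℕ} (hn : 0 < n) {x a : ℝ}
    (h : (n : ℝ)⁻¹ * logb 2 x ≤ a) : x ≤ 2 ^ (n * a) := by
  rcases le_or_gt x 0 with hx | hx
  · exact hx.trans (rpow_pos_of_pos two_pos _).le
  calc x = 2 ^ logb 2 x := (rpow_logb two_pos (by norm_num) hx).symm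
    _ ≤ 2 ^ (n * a) := by
        gcongr
        · norm_num
        · rwa [← inv_mul_le_iff₀ (by exact_mod_cast hn)]

def typicalRatio (QX : 𝒳 → ℝ) (QYX : 𝒳 → 𝒴 → ℝ) (n : ℕ) (ε : ℝ) (ys : Fin n → 𝒴)
    (xs : Fin n → 𝒳) : ℝ :=
  if JTypical QX QYX n ε xs ys then chanProd QYX n xs ys / prodDist (outDist QX QYX) n ys else 0

variable {QX : 𝒳 → ℝ} {QYX : 𝒳 → 𝒴 → ℝ} {n : ℕ} {ε : ℝ} {ys : Fin n → 𝒴}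

lemma Dtyp_eq_inv_mul_sum_typicalRatio (M : ℕ) (C : Fin M → Fin n → 𝒳) :
    Dtyp QX QYX n M ε C ys = (M : ℝ)⁻¹ * ∑ m, typicalRatio QX QYX n ε ys (C m) :=
  rfl

lemma typicalRatio_nonneg (hQX : IsPMF QX) (hQYX : ∀ x, IsPMF (QYX x)) (xs : Fin n → 𝒳) :
    0 ≤ typicalRatio QX QYX n ε ys xs := by
  unfold typicalRatio
  split_ifs
  · exact chanProd_div_prodDist_outDist_nonneg hQX hQYX n xs ys
  · rfl

lemma typicalRatio_le (hn : 0 < n) (xs : Fin n → 𝒳) :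
    typicalRatio QX QYX n ε ys xs ≤ 2 ^ ((n : ℝ) * (mutualInfo QX QYX + ε)) := by
  unfold typicalRatio
  split_ifs with htyp
  · exact le_two_rpow_of_inv_mul_logb_le hn htyp
  · exact (rpow_pos_of_pos two_pos _).le

lemma sum_prodDist_mul_typicalRatio_le_one (hQX : IsPMF QX) (hQYX : ∀ x, IsPMF (QYX x)) :
    ∑ xs, prodDist QX n xs * typicalRatio QX QYX n ε ys xs ≤ 1 := by
  set Qy := prodDist (outDist QX QYX) n ys
  have hle : ∀ xs, prodDist QX n xs * typicalRatio QX QYX n ε ys xs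
      ≤ prodDist QX n xs * chanProd QYX n xs ys / Qy := fun xs => by
    rw [mul_div_assoc]
    refine mul_le_mul_of_nonneg_left ?_ ((isPMF_prodDist hQX n).1 xs)
    unfold typicalRatio
    split_ifs
    · rfl
    · exact chanProd_div_prodDist_outDist_nonneg hQX hQYX n xs ys
  calc ∑ xs, prodDist QX n xs * typicalRatio QX QYX n ε ys xs
      ≤ (∑ xs, prodDist QX n xs * chanProd QYX n xs ys) / Qy := by
        rw [Finset.sum_div]
        exact Finset.sum_le_sum fun xs _ => hle xs
    _ ≤ 1 := by
        rw [sum_prodDist_mul_chanProd]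
        exact div_self_le_one Qy

end TypicalDensity

lemma two_rpow_mul_div_eq_rpow_sub_one {n : ℕ} (hn : 0 < n) {g a : ℝ}
    (hg : g = a * logb 2 n / n) : (2 : ℝ) ^ (n * g) / n = (n : ℝ) ^ (a - 1) := by
  have hn' : (0 : ℝ) < n := by exact_mod_cast hn
  rw [hg, mul_div_cancel₀ _ hn'.ne', mul_comm, rpow_mul zero_le_two,
    rpow_logb two_pos (by norm_num) hn', rpow_sub_one hn'.ne']

theorem typical_density_chernoff_second_order_general
    {𝒳 𝒴 : Type*} [Fintype 𝒳] [Fintype 𝒴]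
    (QX : 𝒳 → ℝ) (QYX : 𝒳 → 𝒴 → ℝ) (hQX : IsPMF QX) (hQYX : ∀ x, IsPMF (QYX x))
    (R : ℝ) (n M : ℕ) (hn : 0 < n) (hM : (M : ℝ) = 2 ^ ((n : ℝ) * R))
    (ε : ℝ) (c r : ℝ)
    (hgap : R - mutualInfo QX QYX - ε = (c - r) * Real.logb 2 ↑n / ↑n)
    (ys : Fin n → 𝒴) :
    cbProb QX n M (fun C => 1 + (Real.sqrt ↑n)⁻¹ ≤ Dtyp QX QYX n M ε C ys)
        ≤ Real.exp (-(1 / (3 * ↑n)) * 2 ^ ((n : ℝ) * (R - mutualInfo QX QYX - ε))) ∧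
      Real.exp (-(1 / (3 * ↑n)) * 2 ^ ((n : ℝ) * (R - mutualInfo QX QYX - ε)))
        = Real.exp (-(1 / 3) * (n : ℝ) ^ (c - r - 1)) := by
  set I := mutualInfo QX QYX
  have hn' : (0 : ℝ) < n := by exact_mod_cast hn
  have hM₀ : (0 : ℝ) < M := hM ▸ rpow_pos_of_pos two_pos _
  have hδ : (√n)⁻¹ ≤ 1 := inv_le_one_of_one_le₀ (one_le_sqrt.2 (by exact_mod_cast hn))
  have hexponent : -((√n)⁻¹ ^ 2 / 3) * (M / 2 ^ ((n : ℝ) * (I + ε)))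
      = -(1 / (3 * n)) * 2 ^ ((n : ℝ) * (R - I - ε)) := by
    rw [hM, ← rpow_sub two_pos, inv_pow, sq_sqrt hn'.le]
    ring_nf
  refine ⟨?_, ?_⟩
  · calc cbProb QX n M (fun C => 1 + (√n)⁻¹ ≤ Dtyp QX QYX n M ε C ys)
        = ∑ C : Fin M → Fin n → 𝒳, (if M * (1 + (√n)⁻¹) ≤ ∑ m, typicalRatio QX QYX n ε ys (C m)
            then ∏ m, prodDist QX n (C m) else 0) := by
          refine Finset.sum_congr rfl fun C _ => ?_
          simp only [Dtyp_eq_inv_mul_sum_typicalRatio, le_inv_mul_iff₀ hM₀]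
      _ ≤ exp (-((√n)⁻¹ ^ 2 / 3) * (M / 2 ^ ((n : ℝ) * (I + ε)))) :=
          chernoff_sum_ge (isPMF_prodDist hQX n) (typicalRatio_nonneg hQX hQYX)
            (rpow_pos_of_pos two_pos _) (typicalRatio_le hn)
            (sum_prodDist_mul_typicalRatio_le_one hQX hQYX) M (by positivity) hδ
      _ = _ := by rw [hexponent]
  · rw [← two_rpow_mul_div_eq_rpow_sub_one hn hgap]
    ring_nf

/-- **Chernoff bound for the typical density, second-order version (Eq. (41)-(43)).**
If `R − I(X;Y) − ε = (c − r) log₂ n / n` with `c > r > 0`, then for every fixed `y^n`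
the probability over the random codebook `𝒞` of size `M = 2^{nR}` that
`D_{𝒞,1}(y^n) ≥ 1 + 1/√n` is at most
`e^{−(1/(3n)) 2^{n(R−I(X;Y)−ε)}} = e^{−(1/3) n^{c−r−1}}`. -/
theorem typical_density_chernoff_second_order
    {𝒳 𝒴 : Type*} [Fintype 𝒳] [Fintype 𝒴]
    (QX : 𝒳 → ℝ) (QYX : 𝒳 → 𝒴 → ℝ) (hQX : IsPMF QX) (hQYX : ∀ x, IsPMF (QYX x))
    (R : ℝ) (n M : ℕ) (hn : 0 < n) (hM : (M : ℝ) = 2 ^ ((n : ℝ) * R))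
    (ε : ℝ) (hε : 0 < ε) (c r : ℝ) (hr : 0 < r) (hrc : r < c)
    (hgap : R - mutualInfo QX QYX - ε = (c - r) * Real.logb 2 ↑n / ↑n)
    (ys : Fin n → 𝒴) :
    cbProb QX n M (fun C => 1 + (Real.sqrt ↑n)⁻¹ ≤ Dtyp QX QYX n M ε C ys)
        ≤ Real.exp (-(1 / (3 * ↑n)) * 2 ^ ((n : ℝ) * (R - mutualInfo QX QYX - ε))) ∧
      Real.exp (-(1 / (3 * ↑n)) * 2 ^ ((n : ℝ) * (R - mutualInfo QX QYX - ε)))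
        = Real.exp (-(1 / 3) * (n : ℝ) ^ (c - r - 1)) :=
  typical_density_chernoff_second_order_general QX QYX hQX hQYX R n M hn hM ε c r hgap ys
end SoftCovering
end

section
/- Let ε > 0 and μ_n > 0. For every codebook C of size 2^{nR} satisfying both Σ_{y^n} P_{C,2}(y^n) < μ_n(1 + 1/√n) and D_{C,1}(y^n) < 1 + 1/√n for every y^n ∈ 𝒴^n, the induced distribution satisfies ‖P_{Y^n|C} − Q_{Y^n}‖_TV ≤ μ_n(1 + 1/√n) + 1/√n. -/
open Finset Real
open scoped BigOperators Classical

noncomputable section SoftCovering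

variable {𝒳 𝒴 : Type*} [Fintype 𝒳] [Fintype 𝒴]

/-- Sum of a product distribution over all sequences equals 1. -/
lemma sum_prodDist {α : Type*} [Fintype α] (p : α → ℝ) (hp : IsPMF p) (n : ℕ) :
    ∑ xs : Fin n → α, prodDist p n xs = 1 := by
  unfold prodDist
  rw [← Fintype.prod_sum (fun _ : Fin n => p)]
  simp [hp.2]

lemma outDist_isPMF {𝒳 𝒴 : Type*} [Fintype 𝒳] [Fintype 𝒴]
    (QX : 𝒳 → ℝ) (QYX : 𝒳 → 𝒴 → ℝ) (hQX : IsPMF QX) (hQYX : ∀ x, IsPMF (QYX x)) :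
    IsPMF (outDist QX QYX) := by
  constructor
  · intro y
    exact Finset.sum_nonneg fun x _ => mul_nonneg (hQX.1 x) ((hQYX x).1 y)
  · unfold outDist
    rw [Finset.sum_comm]
    simp [← Finset.mul_sum, (hQYX _).2, hQX.2]

/-- **Total variation bound for good codebooks, second-order version (Eq. (47)).**
Every codebook `C` of size `M = 2^{nR}` (with codewords in the support of `Q_X`)
satisfying `∑_{y^n} P_{C,2}(y^n) < μ_n(1 + 1/√n)` and `D_{C,1}(y^n) < 1 + 1/√n` for all
`y^n` has `‖P_{Y^n|C} − Q_{Y^n}‖_TV ≤ μ_n(1 + 1/√n) + 1/√n`. -/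
theorem tv_bound_of_good_codebook_second_order
    {𝒳 𝒴 : Type*} [Fintype 𝒳] [Fintype 𝒴]
    (QX : 𝒳 → ℝ) (QYX : 𝒳 → 𝒴 → ℝ) (hQX : IsPMF QX) (hQYX : ∀ x, IsPMF (QYX x))
    (n M : ℕ) (hM : 0 < M) (ε : ℝ) (hε : 0 < ε) (μn : ℝ) (hμn : 0 < μn)
    (C : Fin M → Fin n → 𝒳) (hC : ∀ m i, 0 < QX (C m i))
    (h1 : (∑ ys, Patyp QX QYX n M ε C ys) < μn * (1 + (Real.sqrt ↑n)⁻¹))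
    (h2 : ∀ ys : Fin n → 𝒴, Dtyp QX QYX n M ε C ys < 1 + (Real.sqrt ↑n)⁻¹) :
    tvDist (inducedDist QYX n M C) (prodDist (outDist QX QYX) n)
      ≤ μn * (1 + (Real.sqrt ↑n)⁻¹) + (Real.sqrt ↑n)⁻¹ := by
  set Q : (Fin n → 𝒴) → ℝ := prodDist (outDist QX QYX) n with hQdef
  set P : (Fin n → 𝒴) → ℝ := inducedDist QYX n M C with hPdef
  have hQpmf := outDist_isPMF QX QYX hQX hQYX
  have hQnn : ∀ ys, 0 ≤ Q ys := fun ys =>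
    Finset.prod_nonneg fun i _ => hQpmf.1 _
  have hchan_nn : ∀ m ys, 0 ≤ chanProd QYX n (C m) ys := fun m ys =>
    Finset.prod_nonneg fun i _ => (hQYX _).1 _
  -- Q ys = 0 → chanProd = 0
  have hchan0 : ∀ m ys, Q ys = 0 → chanProd QYX n (C m) ys = 0 := by
    intro m ys hQ0
    by_contra h
    have hpos : 0 < chanProd QYX n (C m) ys :=
      lt_of_le_of_ne (hchan_nn m ys) (Ne.symm h)
    have : 0 < Q ys := by
      apply Finset.prod_pos
      intro i _
      have hqi : 0 < QYX (C m i) (ys i) := by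
        by_contra hq
        push_neg at hq
        have : QYX (C m i) (ys i) = 0 := le_antisymm hq ((hQYX _).1 _)
        have : chanProd QYX n (C m) ys = 0 := by
          unfold chanProd; exact Finset.prod_eq_zero (Finset.mem_univ i) this
        exact absurd this (ne_of_gt hpos)
      calc (0:ℝ) < QX (C m i) * QYX (C m i) (ys i) := mul_pos (hC m i) hqi
        _ ≤ outDist QX QYX (ys i) := Finset.single_le_sum
            (fun x _ => mul_nonneg (hQX.1 x) ((hQYX x).1 _)) (Finset.mem_univ _)
    exact absurd hQ0 (ne_of_gt this)
  have hPatyp_nn : ∀ ys, 0 ≤ Patyp QX QYX n M ε C ys := by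
    intro ys
    apply mul_nonneg (by positivity)
    refine Finset.sum_nonneg fun m _ => ?_
    split
    · exact hchan_nn m ys
    · exact le_rfl
  have hPtyp_nn : ∀ ys, 0 ≤ Ptyp QX QYX n M ε C ys := by
    intro ys
    apply mul_nonneg (by positivity)
    refine Finset.sum_nonneg fun m _ => ?_
    split
    · exact hchan_nn m ys
    · exact le_rfl
  -- split P = Ptyp + Patyp
  have hsplit : ∀ ys, P ys = Ptyp QX QYX n M ε C ys + Patyp QX QYX n M ε C ys := by
    intro ys
    unfold P
    unfold inducedDist Ptyp Patyp
    rw [← mul_add, ← Finset.sum_add_distrib]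
    congr 1
    apply Finset.sum_congr rfl
    intro m _
    by_cases h : JTypical QX QYX n ε (C m) ys <;> simp [h]
  -- pointwise bound: Ptyp - Q ≤ (√n)⁻¹ * Q
  have hkey : ∀ ys, Ptyp QX QYX n M ε C ys - Q ys ≤ (Real.sqrt n)⁻¹ * Q ys := by
    intro ys
    rcases eq_or_lt_of_le (hQnn ys) with hQ0 | hQpos
    · have hPt0 : Ptyp QX QYX n M ε C ys = 0 := by
        unfold Ptyp
        rw [Finset.sum_eq_zero, mul_zero]
        intro m _
        split
        · exact hchan0 m ys hQ0.symm
        · rfl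
      rw [hPt0, ← hQ0]
      simp
    · have hne : prodDist (outDist QX QYX) n ys ≠ 0 := ne_of_gt hQpos
      have hDt : Ptyp QX QYX n M ε C ys = Dtyp QX QYX n M ε C ys * Q ys := by
        have hS : (∑ m, if JTypical QX QYX n ε (C m) ys then chanProd QYX n (C m) ys else 0)
            = (∑ m, if JTypical QX QYX n ε (C m) ys then
                chanProd QYX n (C m) ys / prodDist (outDist QX QYX) n ys else 0)
              * prodDist (outDist QX QYX) n ys := by
          rw [Finset.sum_mul]
          refine Finset.sum_congr rfl fun m _ => ?_
          split
          · rw [div_mul_cancel₀ _ hne]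
          · ring
        unfold Ptyp Dtyp
        rw [hS, hQdef]
        ring
      rw [hDt]
      have := h2 ys
      nlinarith [this, hQpos]
  -- sums
  have hQsum : ∑ ys, Q ys = 1 := sum_prodDist _ hQpmf n
  have hPsum : ∑ ys, P ys = 1 := by
    unfold P
    unfold inducedDist
    rw [← Finset.mul_sum, Finset.sum_comm]
    have h3 : ∀ m : Fin M, ∑ ys, chanProd QYX n (C m) ys = 1 := by
      intro m
      unfold chanProd
      rw [← Fintype.prod_sum (fun i : Fin n => QYX (C m i))]
      exact Finset.prod_eq_one fun i _ => (hQYX _).2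
    have hMne : (M:ℝ) ≠ 0 := Nat.cast_ne_zero.mpr hM.ne'
    rw [Finset.sum_congr rfl fun m _ => h3 m, Finset.sum_const, Finset.card_univ,
      Fintype.card_fin, nsmul_eq_mul, mul_one, inv_mul_cancel₀ hMne]
  -- sum of (Q - Ptyp) = sum Patyp
  have hsum_diff : ∑ ys, (Q ys - Ptyp QX QYX n M ε C ys) = ∑ ys, Patyp QX QYX n M ε C ys := by
    rw [Finset.sum_sub_distrib, hQsum]
    have : ∑ ys, Ptyp QX QYX n M ε C ys
        = 1 - ∑ ys, Patyp QX QYX n M ε C ys := by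
      have := Finset.sum_congr rfl fun ys (_ : ys ∈ Finset.univ) => hsplit ys
      rw [hPsum] at this
      rw [Finset.sum_add_distrib] at this
      linarith
    rw [this]; ring
  -- bound sum |Ptyp - Q|
  have habs : ∀ ys, |Ptyp QX QYX n M ε C ys - Q ys|
      ≤ (Q ys - Ptyp QX QYX n M ε C ys) + 2 * ((Real.sqrt n)⁻¹ * Q ys) := by
    intro ys
    have h1' := hkey ys
    have h2' : 0 ≤ (Real.sqrt n)⁻¹ * Q ys := by
      apply mul_nonneg _ (hQnn ys)
      positivity
    rw [abs_le]
    constructor <;> linarith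
  have hsum_abs : ∑ ys, |Ptyp QX QYX n M ε C ys - Q ys|
      ≤ (∑ ys, Patyp QX QYX n M ε C ys) + 2 * (Real.sqrt n)⁻¹ := by
    calc ∑ ys, |Ptyp QX QYX n M ε C ys - Q ys|
        ≤ ∑ ys, ((Q ys - Ptyp QX QYX n M ε C ys) + 2 * ((Real.sqrt n)⁻¹ * Q ys)) :=
          Finset.sum_le_sum fun ys _ => habs ys
      _ = (∑ ys, Patyp QX QYX n M ε C ys) + 2 * (Real.sqrt n)⁻¹ := by
          rw [Finset.sum_add_distrib, hsum_diff, ← Finset.mul_sum, ← Finset.mul_sum,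
            hQsum]
          ring
  -- conclude
  unfold tvDist
  have hptw : ∀ ys, |P ys - Q ys| ≤ |Ptyp QX QYX n M ε C ys - Q ys| + Patyp QX QYX n M ε C ys := by
    intro ys
    rw [hsplit ys]
    calc |Ptyp QX QYX n M ε C ys + Patyp QX QYX n M ε C ys - Q ys|
        ≤ |Ptyp QX QYX n M ε C ys - Q ys| + |Patyp QX QYX n M ε C ys| := by
          rw [add_sub_right_comm]; exact abs_add_le _ _
      _ = _ := by rw [abs_of_nonneg (hPatyp_nn ys)]
  have : ∑ ys, |P ys - Q ys|
      ≤ 2 * (∑ ys, Patyp QX QYX n M ε C ys) + 2 * (Real.sqrt n)⁻¹ := by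
    calc ∑ ys, |P ys - Q ys|
        ≤ ∑ ys, (|Ptyp QX QYX n M ε C ys - Q ys| + Patyp QX QYX n M ε C ys) :=
          Finset.sum_le_sum fun ys _ => hptw ys
      _ = (∑ ys, |Ptyp QX QYX n M ε C ys - Q ys|) + ∑ ys, Patyp QX QYX n M ε C ys := by
          rw [Finset.sum_add_distrib]
      _ ≤ 2 * (∑ ys, Patyp QX QYX n M ε C ys) + 2 * (Real.sqrt n)⁻¹ := by linarith [hsum_abs]
  linarith [this, h1]
end SoftCovering
end
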